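/- Let p ∈ (1, 2), λ > 0, and E : ℝ^M × ℝ^M → ℝ≥0 convex and differentiable in its second argument with the y-Lipschitz gradient constant K. Suppose f_{y₁}, f_{y₂} ∈ ℝ^N minimize f ↦ E(y_i, ν f) + λ‖f‖_p^p and satisfy ‖f_{y_i}‖_p ≤ r for i = 1, 2. Then ‖f_{y₁} - f_{y₂}‖_p ≤ ((2r)^{2-p} K/(λ p (p-1))) · ‖y₁ - y₂‖₂. -/

import Mathlib

/-!
Write `d = f₁ - f₂` and `w = |f₁| + |f₂|`. The optimality conditions
`∇_f E(yᵢ, ν fᵢ) = -λ p g_p(fᵢ)`, the monotonicity of `∇_f E(y₁, ν ·)` and Hölder's inequality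
against the `y`-Lipschitz bound on `∇_f E(·, ν f₂)` give
`λ p ∑ (g_p(f₁ᵢ) - g_p(f₂ᵢ)) dᵢ ≤ K ‖y₁ - y₂‖₂ ‖d‖_p`.
Since `g_p' = (p - 1)|x|^{p-2}` decreases in `|x|`, the map `x ↦ g_p(x) - (p - 1) S^{p-2} x` is
monotone on `[-S, S]`, so the left side dominates `λ p (p - 1) ∑ dᵢ² wᵢ^{p-2}`. Hölder with
exponents `2/p` and `2/(2-p)` gives `‖d‖_p² ≤ (∑ dᵢ² wᵢ^{p-2}) ‖w‖_p^{2-p}`, and `‖w‖_p ≤ 2r`.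
-/

open Real Finset Set

/-- The paper's `g_p(x) = sign(x)|x|^{p-1}`, in the form `|x|^{p-2} x` of `hasDerivAt_abs_rpow`. -/
noncomputable def signedPow (p x : ℝ) : ℝ := |x| ^ (p - 2) * x

lemma signedPow_of_nonneg {p x : ℝ} (hp : 1 < p) (hx : 0 ≤ x) : signedPow p x = x ^ (p - 1) := by
  rcases hx.eq_or_lt with rfl | hx
  · simp [signedPow, zero_rpow (by linarith : p - 1 ≠ 0)]
  · rw [signedPow, abs_of_pos hx, show p - 1 = (p - 2) + 1 by ring, rpow_add hx, rpow_one]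

lemma signedPow_neg (p x : ℝ) : signedPow p (-x) = -signedPow p x := by
  simp [signedPow]

lemma monotoneOn_signedPow_sub_mul {p S : ℝ} (hp1 : 1 < p) (hp2 : p ≤ 2) (hS : 0 ≤ S) :
    MonotoneOn (fun x ↦ signedPow p x - (p - 1) * S ^ (p - 2) * x) (Icc (-S) S) := by
  set h := fun x ↦ signedPow p x - (p - 1) * S ^ (p - 2) * x
  have hpos : MonotoneOn h (Icc 0 S) := by
    have hEq : EqOn (fun x ↦ x ^ (p - 1) - (p - 1) * S ^ (p - 2) * x) h (Icc 0 S) :=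
      fun x hx ↦ by simp only [h, signedPow_of_nonneg hp1 hx.1]
    refine MonotoneOn.congr ?_ hEq
    refine monotoneOn_of_hasDerivWithinAt_nonneg (convex_Icc 0 S)
      (f' := fun x ↦ (p - 1) * x ^ (p - 1 - 1) - (p - 1) * S ^ (p - 2)) ?_ ?_ ?_
    · exact (continuousOn_id.rpow_const fun _ _ ↦ Or.inr (by linarith)).sub
        (continuousOn_const.mul continuousOn_id)
    · intro x hx
      rw [interior_Icc] at hx
      exact (((hasDerivAt_rpow_const (Or.inl hx.1.ne')).sub
        ((hasDerivAt_id x).const_mul _)).congr_deriv (by simp)).hasDerivWithinAt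
    · intro x hx
      rw [interior_Icc] at hx
      have hSx : S ^ (p - 2) ≤ x ^ (p - 1 - 1) := by
        rw [show p - 1 - 1 = p - 2 by ring]
        exact rpow_le_rpow_of_nonpos hx.1 hx.2.le (by linarith)
      simp only [sub_nonneg]
      exact mul_le_mul_of_nonneg_left hSx (by linarith)
  have hneg : MonotoneOn h (Icc (-S) 0) := by
    intro x hx y hy hxy
    have := hpos ⟨neg_nonneg.2 hy.2, neg_le.1 hy.1⟩ ⟨neg_nonneg.2 hx.2, neg_le.1 hx.1⟩
      (neg_le_neg hxy)
    simp only [h, signedPow_neg] at this ⊢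
    linarith
  rw [← Icc_union_Icc_eq_Icc (neg_nonpos.2 hS) hS]
  exact hneg.union_right hpos (isGreatest_Icc (neg_nonpos.2 hS)) (isLeast_Icc hS)

lemma mul_rpow_mul_sq_le_signedPow_sub_mul_sub {p : ℝ} (hp1 : 1 < p) (hp2 : p ≤ 2) (a b : ℝ) :
    (p - 1) * (|a| + |b|) ^ (p - 2) * (a - b) ^ 2 ≤
      (signedPow p a - signedPow p b) * (a - b) := by
  have hmono := monotoneOn_signedPow_sub_mul hp1 hp2 (add_nonneg (abs_nonneg a) (abs_nonneg b))
  have ha : a ∈ Icc (-(|a| + |b|)) (|a| + |b|) := by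
    constructor <;> linarith [neg_abs_le a, le_abs_self a, abs_nonneg b]
  have hb : b ∈ Icc (-(|a| + |b|)) (|a| + |b|) := by
    constructor <;> linarith [neg_abs_le b, le_abs_self b, abs_nonneg a]
  rcases le_total b a with hba | hab
  · nlinarith [hmono hb ha hba]
  · nlinarith [hmono ha hb hab]

lemma mul_sum_sq_mul_rpow_le_sum_signedPow_sub_mul_sub {ι : Type*} (s : Finset ι) {p : ℝ}
    (hp1 : 1 < p) (hp2 : p ≤ 2) (u v : ι → ℝ) :
    (p - 1) * ∑ i ∈ s, (u i - v i) ^ 2 * (|u i| + |v i|) ^ (p - 2) ≤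
      ∑ i ∈ s, (signedPow p (u i) - signedPow p (v i)) * (u i - v i) := by
  rw [mul_sum]
  exact sum_le_sum fun i _ ↦ by
    simpa only [mul_assoc, mul_comm ((u i - v i) ^ 2)] using
      mul_rpow_mul_sq_le_signedPow_sub_mul_sub hp1 hp2 (u i) (v i)

lemma hasFDerivAt_sum_abs_rpow {ι : Type*} [Fintype ι] {p : ℝ} (hp : 1 < p) (f : ι → ℝ) :
    HasFDerivAt (fun f : ι → ℝ ↦ ∑ i, |f i| ^ p)
      (∑ i, (p * signedPow p (f i)) • (ContinuousLinearMap.proj i : (ι → ℝ) →L[ℝ] ℝ)) f :=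
  .fun_sum (A := fun i (f : ι → ℝ) ↦ |f i| ^ p) fun i _ ↦ by
    rw [signedPow, ← mul_assoc]
    exact (hasDerivAt_abs_rpow (f i) hp).comp_hasFDerivAt f
      (hasFDerivAt_apply (𝕜 := ℝ) (F' := fun _ : ι ↦ ℝ) i f)

lemma eq_neg_mul_signedPow_of_isLocalMin {ι : Type*} [Fintype ι] {φ : (ι → ℝ) → ℝ}
    {g f₀ : ι → ℝ} {p lam : ℝ} (hp : 1 < p)
    (hφ : HasFDerivAt φ (∑ i, g i • (ContinuousLinearMap.proj i : (ι → ℝ) →L[ℝ] ℝ)) f₀)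
    (hmin : IsLocalMin (fun f ↦ φ f + lam * ∑ i, |f i| ^ p) f₀) (j : ι) :
    g j = -(lam * p * signedPow p (f₀ j)) := by
  classical
  have hcrit := hmin.hasFDerivAt_eq_zero (hφ.add ((hasFDerivAt_sum_abs_rpow hp f₀).const_mul lam))
  have hj := congrArg (fun L ↦ L (Pi.single j 1)) hcrit
  simp only [add_apply, smul_apply, _root_.sum_apply, ContinuousLinearMap.proj_apply,
    Pi.single_apply, smul_eq_mul, mul_ite, mul_one, mul_zero, sum_ite_eq', Finset.mem_univ,
    if_true, zero_apply] at hj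
  linarith

lemma ConvexOn.sub_apply_sub_nonneg_of_hasFDerivAt {E : Type*} [NormedAddCommGroup E]
    [NormedSpace ℝ E] {s : Set E} {φ : E → ℝ} {φa φb : E →L[ℝ] ℝ} {a b : E}
    (hφ : ConvexOn ℝ s φ) (ha : a ∈ s) (hb : b ∈ s) (hφa : HasFDerivAt φ φa a)
    (hφb : HasFDerivAt φ φb b) : 0 ≤ (φa - φb) (a - b) := by
  set c := AffineMap.lineMap (k := ℝ) b a
  have hconv : ConvexOn ℝ (Icc 0 1) (φ ∘ c) :=
    (hφ.comp_affineMap c).subset (fun t ht ↦ hφ.1.lineMap_mem hb ha ht) (convex_Icc 0 1)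
  have hc : ∀ t : ℝ, HasDerivAt c (a - b) t := fun t ↦ AffineMap.hasDerivAt_lineMap
  have h0 := hφb.comp_hasDerivAt_of_eq _ (hc 0) (by simp [c])
  have h1 := hφa.comp_hasDerivAt_of_eq _ (hc 1) (by simp [c])
  have hslope := (hconv.le_slope_of_hasDerivAt (by simp) (by simp) one_pos h0).trans
    (hconv.slope_le_of_hasDerivAt (by simp) (by simp) one_pos h1)
  simpa using hslope

lemma inner_le_Lp_conjExponent_mul_Lp {ι : Type*} (s : Finset ι) {p : ℝ} (hp : 1 < p)
    (u v : ι → ℝ) :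
    ∑ i ∈ s, u i * v i ≤
      (∑ i ∈ s, |u i| ^ (p / (p - 1))) ^ ((p - 1) / p) * (∑ i ∈ s, |v i| ^ p) ^ (1 / p) := by
  simpa only [conjExponent, one_div_div] using
    inner_le_Lp_mul_Lq s u v (HolderConjugate.conjExponent hp).symm

lemma abs_rpow_eq_rpow_mul_rpow {p d w : ℝ} (hp : 0 < p) (hdw : |d| ≤ w) :
    |d| ^ p = (d ^ 2 * w ^ (p - 2)) ^ (p / 2) * (w ^ p) ^ ((2 - p) / 2) := by
  rcases (abs_nonneg d |>.trans hdw).eq_or_lt with rfl | hw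
  · simp [abs_nonpos_iff.1 hdw, zero_rpow hp.ne', zero_rpow (by positivity : p / 2 ≠ 0)]
  · rw [mul_rpow (sq_nonneg d) (rpow_nonneg hw.le _), ← sq_abs, ← rpow_natCast,
      ← rpow_mul (abs_nonneg d), mul_assoc, ← rpow_mul hw.le, ← rpow_mul hw.le, ← rpow_add hw,
      show ((2 : ℕ) : ℝ) * (p / 2) = p by push_cast; ring,
      show (p - 2) * (p / 2) + p * ((2 - p) / 2) = 0 by ring, rpow_zero, mul_one]

lemma sum_abs_rpow_le_weighted_sum_sq_rpow_mul_sum_rpow {ι : Type*} (s : Finset ι) {p : ℝ}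
    (hp0 : 0 < p) (hp2 : p < 2) {d w : ι → ℝ} (hdw : ∀ i ∈ s, |d i| ≤ w i) :
    ∑ i ∈ s, |d i| ^ p ≤
      (∑ i ∈ s, d i ^ 2 * w i ^ (p - 2)) ^ (p / 2) * (∑ i ∈ s, w i ^ p) ^ ((2 - p) / 2) := by
  have hw : ∀ i ∈ s, 0 ≤ w i := fun i hi ↦ (abs_nonneg _).trans (hdw i hi)
  have hA : ∀ i ∈ s, 0 ≤ d i ^ 2 * w i ^ (p - 2) :=
    fun i hi ↦ mul_nonneg (sq_nonneg _) (rpow_nonneg (hw i hi) _)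
  have hS : ∀ i ∈ s, 0 ≤ w i ^ p := fun i hi ↦ rpow_nonneg (hw i hi) _
  have h := inner_le_Lp_mul_Lq_of_nonneg s
    (holderConjugate_one_div (a := p / 2) (b := (2 - p) / 2) (by positivity) (by linarith)
      (by ring))
    (fun i hi ↦ rpow_nonneg (hA i hi) (p / 2)) (fun i hi ↦ rpow_nonneg (hS i hi) ((2 - p) / 2))
  have hA' : ∀ i ∈ s, ((d i ^ 2 * w i ^ (p - 2)) ^ (p / 2)) ^ (1 / (p / 2)) =
      d i ^ 2 * w i ^ (p - 2) :=
    fun i hi ↦ by rw [one_div, rpow_rpow_inv (hA i hi) (by positivity)]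
  have hS' : ∀ i ∈ s, ((w i ^ p) ^ ((2 - p) / 2)) ^ (1 / ((2 - p) / 2)) = w i ^ p :=
    fun i hi ↦ by rw [one_div, rpow_rpow_inv (hS i hi) (by linarith)]
  rw [sum_congr rfl fun i hi ↦ abs_rpow_eq_rpow_mul_rpow hp0 (hdw i hi)]
  rwa [sum_congr rfl hA', sum_congr rfl hS', one_div_one_div, one_div_one_div] at h

lemma sq_Lp_le_weighted_sum_sq_mul_Lp_rpow {ι : Type*} (s : Finset ι) {p : ℝ} (hp0 : 0 < p)
    (hp2 : p < 2) {d w : ι → ℝ} (hdw : ∀ i ∈ s, |d i| ≤ w i) :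
    ((∑ i ∈ s, |d i| ^ p) ^ (1 / p)) ^ 2 ≤
      (∑ i ∈ s, d i ^ 2 * w i ^ (p - 2)) * ((∑ i ∈ s, w i ^ p) ^ (1 / p)) ^ (2 - p) := by
  have hw : ∀ i ∈ s, 0 ≤ w i := fun i hi ↦ (abs_nonneg _).trans (hdw i hi)
  have hX : 0 ≤ ∑ i ∈ s, |d i| ^ p := sum_nonneg fun i _ ↦ rpow_nonneg (abs_nonneg _) _
  have hA : 0 ≤ ∑ i ∈ s, d i ^ 2 * w i ^ (p - 2) :=
    sum_nonneg fun i hi ↦ mul_nonneg (sq_nonneg _) (rpow_nonneg (hw i hi) _)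
  have hS : 0 ≤ ∑ i ∈ s, w i ^ p := sum_nonneg fun i hi ↦ rpow_nonneg (hw i hi) _
  calc ((∑ i ∈ s, |d i| ^ p) ^ (1 / p)) ^ 2 = (∑ i ∈ s, |d i| ^ p) ^ (2 / p) := by
        rw [← rpow_natCast, ← rpow_mul hX]; ring_nf
    _ ≤ ((∑ i ∈ s, d i ^ 2 * w i ^ (p - 2)) ^ (p / 2) *
          (∑ i ∈ s, w i ^ p) ^ ((2 - p) / 2)) ^ (2 / p) :=
        rpow_le_rpow hX (sum_abs_rpow_le_weighted_sum_sq_rpow_mul_sum_rpow s hp0 hp2 hdw)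
          (by positivity)
    _ = (∑ i ∈ s, d i ^ 2 * w i ^ (p - 2)) * ((∑ i ∈ s, w i ^ p) ^ (1 / p)) ^ (2 - p) := by
        rw [mul_rpow (rpow_nonneg hA _) (rpow_nonneg hS _), ← rpow_mul hA, ← rpow_mul hS,
          ← rpow_mul hS, div_mul_div_cancel₀ two_ne_zero, div_self hp0.ne', rpow_one]
        congr 2
        field_simp

lemma sq_Lp_sub_le_weighted_sum_sq_mul_add_rpow {ι : Type*} (s : Finset ι) {p : ℝ} (hp1 : 1 ≤ p)
    (hp2 : p < 2) (u v : ι → ℝ) :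
    ((∑ i ∈ s, |u i - v i| ^ p) ^ (1 / p)) ^ 2 ≤
      (∑ i ∈ s, (u i - v i) ^ 2 * (|u i| + |v i|) ^ (p - 2)) *
        ((∑ i ∈ s, |u i| ^ p) ^ (1 / p) + (∑ i ∈ s, |v i| ^ p) ^ (1 / p)) ^ (2 - p) :=
  (sq_Lp_le_weighted_sum_sq_mul_Lp_rpow s (by linarith) hp2 fun i _ ↦ abs_sub _ _).trans <|
    mul_le_mul_of_nonneg_left
      (rpow_le_rpow (by positivity) (Lp_add_le_of_nonneg s hp1 (fun i _ ↦ abs_nonneg (u i))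
        fun i _ ↦ abs_nonneg (v i)) (by linarith))
      (sum_nonneg fun i _ ↦ by positivity)

theorem lp_local_lipschitz_small_p_general {M N : ℕ} (p : ℝ) (hp1 : 1 < p) (hp2 : p < 2)
    (lam : ℝ) (hlam : 0 < lam)
    (E : (Fin M → ℝ) → (Fin M → ℝ) → ℝ)
    (ν : (Fin N → ℝ) →ₗ[ℝ] (Fin M → ℝ))
    (grad : (Fin M → ℝ) → (Fin N → ℝ) → (Fin N → ℝ))
    (hgrad : ∀ y f, HasFDerivAt (fun f' => E y (ν f'))
      (∑ i, grad y f i • (ContinuousLinearMap.proj i : (Fin N → ℝ) →L[ℝ] ℝ)) f)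
    (hconv : ∀ y, ConvexOn ℝ Set.univ (E y))
    (K : ℝ)
    (hK : ∀ y₁ y₂ : Fin M → ℝ, ∀ f : Fin N → ℝ,
      (∑ i, |grad y₁ f i - grad y₂ f i| ^ (p / (p - 1))) ^ ((p - 1) / p) ≤
        K * Real.sqrt (∑ j, (y₁ j - y₂ j) ^ 2))
    (y₁ y₂ : Fin M → ℝ) (f₁ f₂ : Fin N → ℝ)
    (hf₁ : ∀ f, E y₁ (ν f₁) + lam * ∑ i, |f₁ i| ^ p ≤ E y₁ (ν f) + lam * ∑ i, |f i| ^ p)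
    (hf₂ : ∀ f, E y₂ (ν f₂) + lam * ∑ i, |f₂ i| ^ p ≤ E y₂ (ν f) + lam * ∑ i, |f i| ^ p)
    (r : ℝ)
    (hr₁ : (∑ i, |f₁ i| ^ p) ^ (1 / p) ≤ r)
    (hr₂ : (∑ i, |f₂ i| ^ p) ^ (1 / p) ≤ r) :
    (∑ i, |f₁ i - f₂ i| ^ p) ^ (1 / p) ≤
      (2 * r) ^ (2 - p) * K / (lam * p * (p - 1)) *
        Real.sqrt (∑ j, (y₁ j - y₂ j) ^ 2) := by
  set Y := √(∑ j, (y₁ j - y₂ j) ^ 2)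
  set D := (∑ i, |f₁ i - f₂ i| ^ p) ^ (1 / p)
  set A := ∑ i, (f₁ i - f₂ i) ^ 2 * (|f₁ i| + |f₂ i|) ^ (p - 2)
  have hopt₁ := eq_neg_mul_signedPow_of_isLocalMin hp1 (hgrad y₁ f₁) (.of_forall hf₁)
  have hopt₂ := eq_neg_mul_signedPow_of_isLocalMin hp1 (hgrad y₂ f₂) (.of_forall hf₂)
  have hmono : 0 ≤ ∑ i, (grad y₁ f₁ i - grad y₁ f₂ i) * (f₁ i - f₂ i) := by
    simpa [sub_mul, sum_sub_distrib] using ((hconv y₁).comp_linearMap ν)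
      |>.sub_apply_sub_nonneg_of_hasFDerivAt trivial trivial (hgrad y₁ f₁) (hgrad y₁ f₂)
  have hpert : ∑ i, (grad y₁ f₂ i - grad y₂ f₂ i) * (f₂ i - f₁ i) ≤ K * Y * D := by
    have h := inner_le_Lp_conjExponent_mul_Lp Finset.univ hp1
      (fun i ↦ grad y₁ f₂ i - grad y₂ f₂ i) (fun i ↦ f₂ i - f₁ i)
    simp only [abs_sub_comm (f₂ _)] at h
    exact h.trans (mul_le_mul_of_nonneg_right (hK y₁ y₂ f₂) (by positivity))
  have hsplit : lam * p * ∑ i, (signedPow p (f₁ i) - signedPow p (f₂ i)) * (f₁ i - f₂ i) =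
      ∑ i, (grad y₁ f₂ i - grad y₂ f₂ i) * (f₂ i - f₁ i) -
        ∑ i, (grad y₁ f₁ i - grad y₁ f₂ i) * (f₁ i - f₂ i) := by
    rw [mul_sum, ← sum_sub_distrib]
    exact sum_congr rfl fun i _ ↦ by rw [hopt₁, hopt₂]; ring
  have hA : lam * p * (p - 1) * A ≤ K * Y * D := by
    nlinarith [mul_le_mul_of_nonneg_left (mul_sum_sq_mul_rpow_le_sum_signedPow_sub_mul_sub
      Finset.univ hp1 hp2.le f₁ f₂) (by positivity : 0 ≤ lam * p)]
  have hR : 0 ≤ (2 * r) ^ (2 - p) :=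
    rpow_nonneg (by linarith [(rpow_nonneg (sum_nonneg fun i _ ↦ by positivity) _).trans hr₁]) _
  have hD2 : D ^ 2 ≤ A * (2 * r) ^ (2 - p) :=
    (sq_Lp_sub_le_weighted_sum_sq_mul_add_rpow Finset.univ hp1.le hp2 f₁ f₂).trans <|
      mul_le_mul_of_nonneg_left (rpow_le_rpow (by positivity) (by linarith) (by linarith))
        (sum_nonneg fun i _ ↦ by positivity)
  have hKY : 0 ≤ K * Y := (rpow_nonneg (sum_nonneg fun i _ ↦ by positivity) _).trans (hK y₁ y₂ f₁)
  have hc : 0 < lam * p * (p - 1) := mul_pos (by positivity) (by linarith)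
  have hcD2 : lam * p * (p - 1) * D ^ 2 ≤ (2 * r) ^ (2 - p) * K * Y * D := by
    nlinarith [mul_le_mul_of_nonneg_left hD2 hc.le, mul_le_mul_of_nonneg_right hA hR]
  rw [div_mul_eq_mul_div, le_div_iff₀ hc]
  nlinarith [mul_nonneg hR hKY, show 0 ≤ D by positivity]

/-- Local Lipschitz continuity of `ℓ_p`-regularized linear inverse problems for
`p ∈ (1,2)`: under the same hypotheses as the `p ≥ 2` case, plus the a-priori bound
`‖f_{y_i}‖_p ≤ r`, we get `‖f_{y₁} - f_{y₂}‖_p ≤ ((2r)^{2-p}K/(λp(p-1))) ‖y₁ - y₂‖₂`. -/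
theorem lp_local_lipschitz_small_p {M N : ℕ} (p : ℝ) (hp1 : 1 < p) (hp2 : p < 2)
    (lam : ℝ) (hlam : 0 < lam)
    (E : (Fin M → ℝ) → (Fin M → ℝ) → ℝ) (hE0 : ∀ y z, 0 ≤ E y z)
    (ν : (Fin N → ℝ) →ₗ[ℝ] (Fin M → ℝ))
    (grad : (Fin M → ℝ) → (Fin N → ℝ) → (Fin N → ℝ))
    (hgrad : ∀ y f, HasFDerivAt (fun f' => E y (ν f'))
      (∑ i, grad y f i • (ContinuousLinearMap.proj i : (Fin N → ℝ) →L[ℝ] ℝ)) f)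
    (hconv : ∀ y, ConvexOn ℝ Set.univ (E y))
    (K : ℝ)
    (hK : ∀ y₁ y₂ : Fin M → ℝ, ∀ f : Fin N → ℝ,
      (∑ i, |grad y₁ f i - grad y₂ f i| ^ (p / (p - 1))) ^ ((p - 1) / p) ≤
        K * Real.sqrt (∑ j, (y₁ j - y₂ j) ^ 2))
    (y₁ y₂ : Fin M → ℝ) (f₁ f₂ : Fin N → ℝ)
    (hf₁ : ∀ f, E y₁ (ν f₁) + lam * ∑ i, |f₁ i| ^ p ≤ E y₁ (ν f) + lam * ∑ i, |f i| ^ p)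
    (hf₂ : ∀ f, E y₂ (ν f₂) + lam * ∑ i, |f₂ i| ^ p ≤ E y₂ (ν f) + lam * ∑ i, |f i| ^ p)
    (r : ℝ)
    (hr₁ : (∑ i, |f₁ i| ^ p) ^ (1 / p) ≤ r)
    (hr₂ : (∑ i, |f₂ i| ^ p) ^ (1 / p) ≤ r) :
    (∑ i, |f₁ i - f₂ i| ^ p) ^ (1 / p) ≤
      (2 * r) ^ (2 - p) * K / (lam * p * (p - 1)) *
        Real.sqrt (∑ j, (y₁ j - y₂ j) ^ 2) :=
  lp_local_lipschitz_small_p_general p hp1 hp2 lam hlam E ν grad hgrad hconv K hK y₁ y₂ f₁ f₂ hf₁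
    hf₂ r hr₁ hr₂
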